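/- arXiv:1801.02006 — 7 statements merged into one kernel-verified Lean document; each statement's English description precedes it below -/
import Mathlib

section
/- Let (X_α)_{α ∈ A} be a family of topological spaces such that every point x of each X_α has a neighbourhood basis consisting of closed, quasi-compact neighbourhoods of x. Let Y be a topological space such that every point y of Y has a neighbourhood basis consisting of closed neighbourhoods of y. Endow X := ∏_{α ∈ A} X_α with the product topology, and let f : X → Y be a map such that the restriction f|_K is continuous for every quasi-compact subset K ⊆ X. Then f is continuous. -/
/-!
Fix `x` and a neighbourhood `V` of `f x`. On each finite-dimensional slice through `x` (the points
agreeing with `x` off a finite set `R`) `f` is continuous at `x`, because the slice meets a compact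
product neighbourhood in a compact set. The heart of the proof is a single box `∏ W` around `x` on
whose points differing from `x` in finitely many coordinates `f` stays in `V`: were there none, one
could choose, inductively, such points `p n` escaping `V`, each lying in the slice neighbourhoods of
all earlier supports. The `p n` then lie in one compact product, and a cluster point `z` of them is
both a limit of escaping points and a limit of its own truncations, which lie in the slices and are
mapped into a closed neighbourhood of `f x` inside `V`. Finally every point of the box is the limit
of its finite truncations, all of which lie in the compact set `∏ {q α, x α}`.
-/

open Filter Set Topology

section

variable {A : Type*} {X : A → Type*} [∀ α, TopologicalSpace (X α)]
  {Y : Type*} [TopologicalSpace Y] {f : (∀ α, X α) → Y}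

theorem exists_isCompact_forall_mem_pi {S : ℕ → Set A} (hS : Monotone S)
    {p : ℕ → ∀ α, X α} {x : ∀ α, X α} {L : ∀ α, Set (X α)} (hL : ∀ α, IsCompact (L α))
    (hpL : ∀ n, ∀ α ∈ S n, p n α ∈ L α) (hpx : ∀ n, ∀ α ∉ S (n + 1), p n α = x α) :
    ∃ K : ∀ α, Set (X α), (∀ α, IsCompact (K α)) ∧ ∀ n, p n ∈ univ.pi K := by
  refine ⟨fun α => L α ∪ (fun n => p n α) '' {n | α ∉ S n},
    fun α => (hL α).union (Finite.isCompact ?_), fun n α _ => ?_⟩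
  · by_cases h : ∃ N, α ∈ S N
    · obtain ⟨N, hN⟩ := h
      refine ((finite_Iio N).image _).subset (image_mono fun n hn => ?_)
      by_contra hnN
      exact hn (hS (not_lt.1 hnN) hN)
    · simp only [not_exists] at h
      refine (finite_singleton (x α)).subset ?_
      rintro _ ⟨n, -, rfl⟩
      exact hpx n α (h _)
  · by_cases h : α ∈ S n
    · exact Or.inl (hpL n α h)
    · exact Or.inr ⟨n, h, rfl⟩

variable [DecidableEq A]

theorem tendsto_piecewise_nhds {ι : Type*} {l : Filter ι} {F : ι → Finset A} {q x : ∀ α, X α}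
    (h : ∀ α, (∀ᶠ i in l, α ∈ F i) ∨ x α ⤳ q α) :
    Tendsto (fun i => (F i).piecewise q x) l (𝓝 q) := by
  refine tendsto_pi_nhds.2 fun α => ?_
  rcases h α with hF | hxq
  · exact tendsto_const_nhds.congr'
      (hF.mono fun i hi => (Finset.piecewise_eq_of_mem _ _ _ hi).symm)
  · refine tendsto_nhds.2 fun U hU hqU => Eventually.of_forall fun i => ?_
    by_cases hi : α ∈ F i
    · simpa [hi] using hqU
    · simpa [hi] using hxq.mem_open hU hqU

theorem apply_mem_of_eventually_piecewise_mem
    (hf : ∀ K : Set (∀ α, X α), IsCompact K → ContinuousOn f K)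
    {ι : Type*} {l : Filter ι} [l.NeBot] {F : ι → Finset A} {q x : ∀ α, X α}
    (h : ∀ α, (∀ᶠ i in l, α ∈ F i) ∨ x α ⤳ q α) {C : Set Y} (hC : IsClosed C)
    (hFC : ∀ᶠ i in l, f ((F i).piecewise q x) ∈ C) : f q ∈ C := by
  set P : Set (∀ α, X α) := univ.pi fun α => {q α, x α}
  have hP : IsCompact P := isCompact_univ_pi fun α => (toFinite _).isCompact
  have hFP : ∀ i, (F i).piecewise q x ∈ P := fun i α _ => by
    by_cases hi : α ∈ F i <;> simp [hi]
  have hqP : q ∈ P := fun α _ => mem_insert _ _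
  exact hC.mem_of_tendsto ((hf P hP q hqP).tendsto.comp
    (tendsto_nhdsWithin_iff.2 ⟨tendsto_piecewise_nhds h, .of_forall hFP⟩)) hFC

theorem exists_closed_compact_nhds_forall_piecewise_mem
    (hX : ∀ (α : A) (x : X α), ∀ U ∈ 𝓝 x, ∃ K ∈ 𝓝 x, K ⊆ U ∧ IsClosed K ∧ IsCompact K)
    (hf : ∀ K : Set (∀ α, X α), IsCompact K → ContinuousOn f K)
    (x : ∀ α, X α) (R : Finset A) {U : Set Y} (hU : U ∈ 𝓝 (f x)) :
    ∃ M : ∀ α, Set (X α), (∀ α, M α ∈ 𝓝 (x α)) ∧ (∀ α, IsClosed (M α)) ∧ (∀ α, IsCompact (M α)) ∧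
      ∀ r ∈ (R : Set A).pi M, f (R.piecewise r x) ∈ U := by
  choose K hKx _ _ hK using fun α => hX α (x α) univ univ_mem
  set N : Set (∀ α, X α) := univ.pi (R.piecewise K fun α => {x α})
  have hN : IsCompact N := isCompact_univ_pi fun α => by
    by_cases hα : α ∈ R
    · simpa [hα] using hK α
    · simp [hα]
  have hxN : x ∈ N := fun α _ => by
    by_cases hα : α ∈ R
    · simpa [hα] using mem_of_mem_nhds (hKx α)
    · simp [hα]
  have hUN : f ⁻¹' U ∈ 𝓝 x ⊓ 𝓟 N := hf N hN x hxN hU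
  rw [mem_inf_principal, nhds_pi, Filter.mem_pi] at hUN
  obtain ⟨I, -, t, ht, hIt⟩ := hUN
  choose M hMx hMtK hMc hMk using fun α => hX α (x α) _ (inter_mem (ht α) (hKx α))
  refine ⟨M, hMx, hMc, hMk, fun r hr => hIt (fun α _ => ?_) (fun α _ => ?_)⟩
  · by_cases hα : α ∈ R
    · simpa [hα] using (hMtK α (hr α hα)).1
    · simpa [hα] using mem_of_mem_nhds (ht α)
  · by_cases hα : α ∈ R
    · simpa [hα] using (hMtK α (hr α hα)).2
    · simp [hα]

theorem exists_apply_mem_of_piecewise_mem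
    (hf : ∀ K : Set (∀ α, X α), IsCompact K → ContinuousOn f K)
    {x : ∀ α, X α} {M : Finset A → ∀ α, Set (X α)}
    (hMc : ∀ R α, IsClosed (M R α)) (hMk : ∀ R α, IsCompact (M R α))
    {C G : Set Y} (hC : IsClosed C) (hG : IsOpen G) (hCG : C ⊆ G)
    (hMC : ∀ R : Finset A, ∀ r ∈ (R : Set A).pi (M R), f (R.piecewise r x) ∈ C)
    {S : ℕ → Finset A} (hS : Monotone S) {p : ℕ → ∀ α, X α}
    (hpM : ∀ n, ∀ α ∈ S n, ∀ m ≤ n, p n α ∈ M (S m) α)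
    (hpx : ∀ n, ∀ α ∉ S (n + 1), p n α = x α) : ∃ n, f (p n) ∈ G := by
  by_contra! hpG
  obtain ⟨K, hK, hpK⟩ := exists_isCompact_forall_mem_pi (S := fun n => S n)
    (fun _ _ h => Finset.coe_subset.2 (hS h)) (fun α => hMk (S 0) α)
    (fun n α hα => hpM n α hα 0 n.zero_le) hpx
  set 𝒰 := Ultrafilter.of (atTop : Filter ℕ)
  have h𝒰 : (𝒰 : Filter ℕ) ≤ atTop := Ultrafilter.of_le _
  obtain ⟨z, hzK, hpz⟩ := (isCompact_univ_pi hK).ultrafilter_le_nhds (𝒰.map p)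
    (le_principal_iff.2 (mem_map.2 (univ_mem' hpK)))
  replace hpz : Tendsto p 𝒰 (𝓝 z) := hpz
  have hzG : f z ∉ G :=
    hG.isClosed_compl.mem_of_tendsto ((hf _ (isCompact_univ_pi hK) z hzK).tendsto.comp
      (tendsto_nhdsWithin_iff.2 ⟨hpz, .of_forall hpK⟩)) (.of_forall hpG)
  have hzM : ∀ n, ∀ α ∈ S n, z α ∈ M (S n) α := fun n α hα =>
    (hMc _ _).mem_of_tendsto (tendsto_pi_nhds.1 hpz α)
      ((eventually_ge_atTop n).filter_mono h𝒰 |>.mono fun i hi => hpM i α (hS hi hα) n hi)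
  -- Without separation `z α` need not equal `x α` off the supports, but it is a limit of `x α`.
  have hxz : ∀ α, (∀ n, α ∉ S n) → x α ⤳ z α := fun α hα =>
    specializes_iff_pure.2 fun U hU =>
      ((tendsto_pi_nhds.1 hpz α).eventually_mem hU).exists.elim fun i hi => by
        rwa [hpx i α (hα _)] at hi
  have hzC : f z ∈ C := by
    refine apply_mem_of_eventually_piecewise_mem hf (l := atTop) (F := S) (fun α => ?_) hC
      (.of_forall fun n => hMC _ z (hzM n))
    by_cases hα : ∃ N, α ∈ S N
    · obtain ⟨N, hN⟩ := hα
      exact Or.inl (eventually_atTop.2 ⟨N, fun n hn => hS hn hN⟩)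
    · exact Or.inr (hxz α (not_exists.1 hα))
  exact hzG (hCG hzC)

theorem exists_finset_nhds_forall_piecewise_mem
    (hf : ∀ K : Set (∀ α, X α), IsCompact K → ContinuousOn f K)
    {x : ∀ α, X α} {M : Finset A → ∀ α, Set (X α)} (hMx : ∀ R α, M R α ∈ 𝓝 (x α))
    (hMc : ∀ R α, IsClosed (M R α)) (hMk : ∀ R α, IsCompact (M R α))
    {C G : Set Y} (hC : IsClosed C) (hG : IsOpen G) (hCG : C ⊆ G)
    (hMC : ∀ R : Finset A, ∀ r ∈ (R : Set A).pi (M R), f (R.piecewise r x) ∈ C) :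
    ∃ H : Finset A, ∃ W : ∀ α, Set (X α), (∀ α, W α ∈ 𝓝 (x α)) ∧
      ∀ q ∈ (H : Set A).pi W, ∀ F : Finset A, f (F.piecewise q x) ∈ G := by
  by_contra! hbad
  -- Indexing by all subsets of `T` lets the supports below grow by plain iteration.
  set W : Finset A → ∀ α, Set (X α) := fun T α => ⋂ R ∈ T.powerset, M R α
  have hW : ∀ T α, W T α ∈ 𝓝 (x α) := fun T α => (biInter_finset_mem _).2 fun R _ => hMx R α
  choose q hqW F hqF using fun T => hbad T (W T) (hW T)
  set S : ℕ → Finset A := fun n => (fun T => T ∪ F T)^[n] ∅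
  have hS_succ : ∀ n, S (n + 1) = S n ∪ F (S n) := fun n => Function.iterate_succ_apply' _ n ∅
  have hS : Monotone S := monotone_nat_of_le_succ fun n => hS_succ n ▸ Finset.subset_union_left
  set p : ℕ → ∀ α, X α := fun n => (F (S n)).piecewise (q (S n)) x
  have hpW : ∀ n, ∀ α ∈ S n, p n α ∈ W (S n) α := fun n α hα => by
    by_cases hαF : α ∈ F (S n)
    · simpa [p, hαF] using hqW (S n) α hα
    · simpa [p, hαF] using mem_of_mem_nhds (hW (S n) α)
  have hpx : ∀ n, ∀ α ∉ S (n + 1), p n α = x α := fun n α hα =>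
    Finset.piecewise_eq_of_notMem _ _ _ fun hαF => hα (hS_succ n ▸ Finset.mem_union_right _ hαF)
  obtain ⟨n, hn⟩ := exists_apply_mem_of_piecewise_mem hf hMc hMk hC hG hCG hMC hS
    (fun n α hα m hmn => mem_iInter₂.1 (hpW n α hα) (S m) (Finset.mem_powerset.2 (hS hmn))) hpx
  exact hqF (S n) hn

end

theorem product_of_locally_quasicompact_is_kR
    {A : Type*} {X : A → Type*} [∀ α, TopologicalSpace (X α)]
    {Y : Type*} [TopologicalSpace Y]
    (hX : ∀ (α : A) (x : X α), ∀ U ∈ nhds x,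
      ∃ K ∈ nhds x, K ⊆ U ∧ IsClosed K ∧ IsCompact K)
    (hY : ∀ (y : Y), ∀ U ∈ nhds y, ∃ C ∈ nhds y, C ⊆ U ∧ IsClosed C)
    (f : (∀ α, X α) → Y)
    (hf : ∀ K : Set (∀ α, X α), IsCompact K → ContinuousOn f K) :
    Continuous f := by
  classical
  refine continuous_iff_continuousAt.2 fun x V hV => ?_
  obtain ⟨C, hC, hCV, hCc⟩ := hY (f x) V hV
  obtain ⟨C', hC', hC'C, hC'c⟩ := hY (f x) (interior C) (interior_mem_nhds.2 hC)
  choose M hMx hMc hMk hMC using fun R : Finset A =>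
    exists_closed_compact_nhds_forall_piecewise_mem hX hf x R hC'
  obtain ⟨H, W, hW, hWC⟩ := exists_finset_nhds_forall_piecewise_mem hf hMx hMc hMk hC'c
    isOpen_interior hC'C hMC
  refine mem_map.2 <|
    mem_of_superset (set_pi_mem_nhds H.finite_toSet fun α _ => hW α) fun q hq => ?_
  refine hCV (closure_minimal interior_subset hCc ?_)
  refine apply_mem_of_eventually_piecewise_mem hf (l := atTop) (F := id) (fun α => Or.inl ?_)
    isClosed_closure (.of_forall fun F => subset_closure (hWC q hq F))
  exact (eventually_ge_atTop {α}).mono fun F hF => hF (Finset.mem_singleton_self α)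
end

section
/- Let (X_α)_{α ∈ A} be a family of locally compact Hausdorff topological spaces and let Y be a regular topological space. Endow X := ∏_{α ∈ A} X_α with the product topology, and let f : X → Y be a map such that the restriction f|_K is continuous for every compact subset K ⊆ X. Then f is continuous. -/
/-!
Fix `x` and a closed neighbourhood `V` of `f x` such that `f ⁻¹' V` is not a neighbourhood of `x`.
Continuity of `f` on a box of compact neighbourhoods of the coordinates of `x` gives a smaller such
box `∏ C α` with `f (∏ C α) ⊆ interior V`. Every basic neighbourhood of `x` contains a point `y`
with `f y ∉ V`, and continuity of `f` on the finite box `∏ {x α, y α}` lets us reset all but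
finitely many coordinates of `y` to those of `x`. Constraining, at each step, the coordinates on
which the earlier points differ from `x` yields points `z m` with `f (z m) ∉ V`, each coordinate of
which eventually lies in `C α`. They lie in the compact box `∏ (C α ∪ {z m α | m})` and cluster at
a point of `∏ C α`, where continuity of `f` on that box contradicts `f (∏ C α) ⊆ interior V`.
-/

open Set Filter Topology

theorem IsCompact.union_range_of_eventually_mem_cofinite {Z ι : Type*} [TopologicalSpace Z]
    {K : Set Z} (hK : IsCompact K) {u : ι → Z} (hu : ∀ᶠ i in cofinite, u i ∈ K) :
    IsCompact (K ∪ range u) := by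
  rw [← union_sdiff_self]
  refine hK.union (((eventually_cofinite.1 hu).image u).subset ?_).isCompact
  rintro _ ⟨⟨i, rfl⟩, hi⟩
  exact ⟨i, hi, rfl⟩

section Product

variable {A : Type*} {X : A → Type*} [∀ α, TopologicalSpace (X α)]

theorem exists_isCompact_nhds_pi_subset_of_mem_nhdsWithin [∀ α, LocallyCompactSpace (X α)]
    {x : ∀ α, X α} {K : ∀ α, Set (X α)} (hK : ∀ α, K α ∈ 𝓝 (x α)) {s : Set (∀ α, X α)}
    (hs : s ∈ 𝓝[pi univ K] x) :
    ∃ C : ∀ α, Set (X α), (∀ α, IsCompact (C α)) ∧ (∀ α, C α ∈ 𝓝 (x α)) ∧ pi univ C ⊆ s := by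
  obtain ⟨t, ht, hts⟩ := mem_nhdsWithin_iff_exists_mem_nhds_inter.1 hs
  rw [nhds_pi, Filter.mem_pi'] at ht
  obtain ⟨I, u, hu, hIu⟩ := ht
  choose C hC hCsub hCc using fun α => local_compact_nhds (inter_mem (hK α) (hu α))
  refine ⟨C, hCc, hC, fun w hw => hts ⟨hIu fun α _ => ?_, fun α _ => ?_⟩⟩
  · exact (hCsub α (hw α trivial)).2
  · exact (hCsub α (hw α trivial)).1

theorem exists_finset_forall_piecewise_mem [DecidableEq A] {x y : ∀ α, X α}
    {s : Set (∀ α, X α)} (hs : s ∈ 𝓝[pi univ fun α => {x α, y α}] y) :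
    ∃ G : Finset A, ∀ I : Finset A, G ⊆ I → I.piecewise y x ∈ s := by
  obtain ⟨t, ht, hts⟩ := mem_nhdsWithin_iff_exists_mem_nhds_inter.1 hs
  rw [nhds_pi, Filter.mem_pi'] at ht
  obtain ⟨G, u, hu, hGu⟩ := ht
  refine ⟨G, fun I hGI => hts ⟨hGu fun α hα => ?_, fun α _ => ?_⟩⟩
  · rw [Finset.piecewise_eq_of_mem _ _ _ (hGI hα)]
    exact mem_of_mem_nhds (hu α)
  · by_cases h : α ∈ I <;> simp [Finset.piecewise, h]

variable {Y : Type*} [TopologicalSpace Y] {f : (∀ α, X α) → Y}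

theorem exists_finite_modification_notMem
    (hf : ∀ K : Set (∀ α, X α), IsCompact K → ContinuousOn f K) {V : Set Y} (hV : IsClosed V)
    {x : ∀ α, X α} (hx : f ⁻¹' V ∉ 𝓝 x) {C : ∀ α, Set (X α)} (hC : ∀ α, C α ∈ 𝓝 (x α))
    (F : Finset A) :
    ∃ (I : Finset A) (z : ∀ α, X α), f z ∉ V ∧ (∀ α ∈ F, z α ∈ C α) ∧ ∀ α ∉ I, z α = x α := by
  classical
  obtain ⟨y, hyC, hyV⟩ : ∃ y ∈ (F : Set A).pi C, f y ∉ V := by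
    by_contra! h
    exact hx (mem_of_superset (set_pi_mem_nhds F.finite_toSet fun α _ => hC α) h)
  have hpair : IsCompact (pi univ fun α => ({x α, y α} : Set (X α))) :=
    isCompact_univ_pi fun α => (toFinite _).isCompact
  obtain ⟨G, hG⟩ := exists_finset_forall_piecewise_mem
    (hf _ hpair y (fun α _ => Or.inr rfl) (hV.isOpen_compl.mem_nhds hyV))
  refine ⟨F ∪ G, (F ∪ G).piecewise y x, hG _ Finset.subset_union_right, fun α hα => ?_,
    fun α hα => Finset.piecewise_eq_of_notMem _ _ _ hα⟩
  rw [Finset.piecewise_eq_of_mem _ _ _ (Finset.mem_union_left _ hα)]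
  exact hyC α hα

theorem exists_seq_notMem_eventually_mem
    (hf : ∀ K : Set (∀ α, X α), IsCompact K → ContinuousOn f K) {V : Set Y} (hV : IsClosed V)
    {x : ∀ α, X α} (hx : f ⁻¹' V ∉ 𝓝 x) {C : ∀ α, Set (X α)} (hC : ∀ α, C α ∈ 𝓝 (x α)) :
    ∃ z : ℕ → ∀ α, X α, (∀ m, f (z m) ∉ V) ∧ ∀ α, ∀ᶠ m in atTop, z m α ∈ C α := by
  classical
  choose I z hzV hzC hzx using exists_finite_modification_notMem hf hV hx hC
  set F : ℕ → Finset A := fun n => (fun s => s ∪ I s)^[n] ∅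
  have hF_succ (n : ℕ) : F (n + 1) = F n ∪ I (F n) := Function.iterate_succ_apply' _ _ _
  have hF_mono : Monotone F :=
    monotone_nat_of_le_succ fun n => (hF_succ n).symm ▸ Finset.subset_union_left
  refine ⟨fun n => z (F n), fun n => hzV _, fun α => ?_⟩
  by_cases h : ∃ n, α ∈ I (F n)
  · obtain ⟨n, hn⟩ := h
    filter_upwards [eventually_gt_atTop n] with m hm
    exact hzC _ α (hF_mono hm ((hF_succ n).symm ▸ Finset.mem_union_right _ hn))
  · refine Eventually.of_forall fun m => ?_
    show z (F m) α ∈ C α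
    rw [hzx (F m) α fun hm => h ⟨m, hm⟩]
    exact mem_of_mem_nhds (hC α)

theorem exists_mem_pi_mapClusterPt_comp [∀ α, T2Space (X α)]
    (hf : ∀ K : Set (∀ α, X α), IsCompact K → ContinuousOn f K) {C : ∀ α, Set (X α)}
    (hC : ∀ α, IsCompact (C α)) {z : ℕ → ∀ α, X α} (hz : ∀ α, ∀ᶠ m in atTop, z m α ∈ C α) :
    ∃ zs ∈ pi univ C, MapClusterPt (f zs) atTop (f ∘ z) := by
  set L := pi univ fun α => C α ∪ range fun m => z m α
  have hL : IsCompact L := isCompact_univ_pi fun α =>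
    (hC α).union_range_of_eventually_mem_cofinite (Nat.cofinite_eq_atTop ▸ hz α)
  have hzL : map z atTop ≤ 𝓟 L :=
    tendsto_principal.2 (Eventually.of_forall fun m α _ => Or.inr ⟨m, rfl⟩)
  obtain ⟨zs, hzsL, hzs⟩ := hL.exists_mapClusterPt hzL
  refine ⟨zs, fun α _ => ?_,
    hzs.tendsto_comp' ((hf L hL zs hzsL).mono_left (inf_le_inf_left _ hzL))⟩
  exact (hC α).isClosed.mem_of_mapClusterPt
    (hzs.continuousAt_comp (continuous_apply α).continuousAt) (hz α)

end Product

theorem product_of_locally_compact_hausdorff_map_to_regular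
    {A : Type*} {X : A → Type*} [∀ α, TopologicalSpace (X α)]
    [∀ α, T2Space (X α)] [∀ α, LocallyCompactSpace (X α)]
    {Y : Type*} [TopologicalSpace Y] [RegularSpace Y]
    (f : (∀ α, X α) → Y)
    (hf : ∀ K : Set (∀ α, X α), IsCompact K → ContinuousOn f K) :
    Continuous f := by
  refine continuous_iff_continuousAt.2 fun x => ?_
  rw [ContinuousAt, (closed_nhds_basis (f x)).tendsto_right_iff]
  rintro V ⟨hV, hVc⟩
  by_contra hx
  choose K hKc hK using fun α => exists_compact_mem_nhds (x α)
  obtain ⟨C, hCc, hC, hCV⟩ := exists_isCompact_nhds_pi_subset_of_mem_nhdsWithin hK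
    (hf _ (isCompact_univ_pi hKc) x (fun α _ => mem_of_mem_nhds (hK α)) (interior_mem_nhds.2 hV))
  obtain ⟨z, hzV, hzC⟩ := exists_seq_notMem_eventually_mem hf hVc hx hC
  obtain ⟨zs, hzsC, hzs⟩ := exists_mem_pi_mapClusterPt_comp hf hCc hzC
  exact isOpen_interior.isClosed_compl.mem_of_mapClusterPt hzs
    (Eventually.of_forall fun m h => hzV m (interior_subset h)) (hCV hzsC)
end

section
/- Let (X_α)_{α ∈ A} be a family of locally compact Hausdorff topological spaces and endow X := ∏_{α ∈ A} X_α with the product topology. Then a function f : X → ℝ is continuous if and only if its restriction f|_K is continuous for every compact subset K ⊆ X. -/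
open Topology

theorem product_of_locally_compact_hausdorff_real_valued_kR
    {A : Type*} {X : A → Type*} [∀ α, TopologicalSpace (X α)]
    [∀ α, T2Space (X α)] [∀ α, LocallyCompactSpace (X α)]
    (f : (∀ α, X α) → ℝ) :
    Continuous f ↔ ∀ K : Set (∀ α, X α), IsCompact K → ContinuousOn f K := by
  classical
  refine ⟨fun hf K _ => hf.continuousOn, fun hf => ?_⟩
  rw [continuous_iff_continuousAt]
  intro x
  by_contra hx
  rw [ContinuousAt, Metric.tendsto_nhds] at hx
  push_neg at hx
  obtain ⟨ε, hε, hne⟩ := hx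
  have hbad : ∀ U ∈ 𝓝 x, ∃ y ∈ U, ε ≤ dist (f y) (f x) := by
    intro U hU
    obtain ⟨y, hyU, hyd⟩ := Filter.frequently_iff.mp (Filter.not_eventually.mp hne) hU
    exact ⟨y, hyU, not_not.mp hyd⟩
  -- compact neighborhoods
  obtain ⟨Q, hQc, hQn⟩ : ∃ Q : ∀ α, Set (X α), (∀ α, IsCompact (Q α)) ∧ ∀ α, Q α ∈ 𝓝 (x α) := by
    choose Q h1 h2 using fun α => exists_compact_mem_nhds (x α)
    exact ⟨Q, h1, h2⟩
  -- the key step lemma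
  have hstep : ∀ H : Finset A, ∃ G : Finset A, ∃ y z : ∀ α, X α,
      H ⊆ G ∧ (∀ α ∈ H, y α = z α) ∧ (∀ α ∈ H, y α ∈ Q α) ∧ (∀ α ∈ H, z α ∈ Q α) ∧
      (∀ α ∉ G, y α = x α) ∧ (∀ α ∉ G, z α = x α) ∧ ε / 4 < dist (f y) (f z) := by
    intro H
    set g : (∀ α, X α) → ∀ α, X α := fun u α => if α ∈ H then u α else x α with hg
    have hgc : Continuous g := by
      apply continuous_pi
      intro α
      by_cases h : α ∈ H
      · simpa [hg, h] using continuous_apply α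
      · simpa [hg, h] using (continuous_const : Continuous fun _ : ∀ α, X α => x α)
    have hgx : g x = x := funext fun α => by by_cases h : α ∈ H <;> simp [hg, h]
    set P' : Set (∀ α, X α) := Set.pi Set.univ (fun α => if α ∈ H then Q α else {x α}) with hP'
    have hP'c : IsCompact P' := by
      apply isCompact_univ_pi
      intro α
      by_cases h : α ∈ H
      · simpa [h] using hQc α
      · simpa [h] using isCompact_singleton (a := x α)
    set P : Set (∀ α, X α) := (H : Set A).pi (fun α => Q α) with hP
    have hmaps : Set.MapsTo g P P' := by
      intro u hu α _
      by_cases h : α ∈ H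
      · simpa [hg, h] using hu α h
      · simp [hg, h]
    have hPn : P ∈ 𝓝 x := set_pi_mem_nhds H.finite_toSet (fun α _ => hQn α)
    have hcfg : ContinuousAt (f ∘ g) x :=
      ((hf P' hP'c).comp hgc.continuousOn hmaps).continuousAt hPn
    have hV1 : (f ∘ g) ⁻¹' Metric.ball (f x) (ε / 4) ∈ 𝓝 x := by
      apply hcfg.preimage_mem_nhds
      have : (f ∘ g) x = f x := by simp [hgx]
      rw [this]
      exact Metric.ball_mem_nhds _ (by positivity)
    have hV2 : (H : Set A).pi (fun α => interior (Q α)) ∈ 𝓝 x :=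
      set_pi_mem_nhds H.finite_toSet fun α _ => interior_mem_nhds.2 (hQn α)
    obtain ⟨y₀, hy₀V, hy₀d⟩ := hbad _ (Filter.inter_mem hV1 hV2)
    -- finite-support approximation of y₀ via the two-point compact product
    set S : Set (∀ α, X α) := Set.pi Set.univ (fun α => {y₀ α, x α}) with hS
    have hSc : IsCompact S := isCompact_univ_pi fun α => (Set.toFinite _).isCompact
    have hy₀S : y₀ ∈ S := fun α _ => Or.inl rfl
    have hcw : ContinuousWithinAt f S y₀ := hf S hSc y₀ hy₀S
    have hmem : f ⁻¹' Metric.ball (f y₀) (ε / 2) ∈ 𝓝[S] y₀ :=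
      hcw (Metric.ball_mem_nhds _ (by positivity))
    obtain ⟨U, hUo, hy₀U, hUsub⟩ := mem_nhdsWithin.1 hmem
    obtain ⟨I, u, hIu, hpisub⟩ := isOpen_pi_iff.1 hUo y₀ hy₀U
    set y : ∀ α, X α := fun α => if α ∈ H ∪ I then y₀ α else x α with hy
    have hyS : y ∈ S := by
      intro α _
      show (if α ∈ H ∪ I then y₀ α else x α) ∈ ({y₀ α, x α} : Set (X α))
      by_cases h : α ∈ H ∪ I
      · rw [if_pos h]; exact Set.mem_insert _ _
      · rw [if_neg h]; exact Set.mem_insert_iff.2 (Or.inr rfl)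
    have hyU : y ∈ U := by
      apply hpisub
      intro α hα
      have h : α ∈ H ∪ I := Finset.mem_union_right _ hα
      show (if α ∈ H ∪ I then y₀ α else x α) ∈ u α
      rw [if_pos h]
      exact (hIu α hα).2
    have hyd : dist (f y) (f y₀) < ε / 2 := by
      have := hUsub ⟨hyU, hyS⟩
      simpa [Metric.mem_ball] using this
    have hgy : g y = g y₀ := by
      funext α
      show (if α ∈ H then y α else x α) = (if α ∈ H then y₀ α else x α)
      by_cases h : α ∈ H
      · rw [if_pos h, if_pos h]
        show (if α ∈ H ∪ I then y₀ α else x α) = y₀ α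
        exact if_pos (Finset.mem_union_left _ h)
      · rw [if_neg h, if_neg h]
    have hgyd : dist (f (g y₀)) (f x) < ε / 4 := by
      have := hy₀V.1
      simpa [Metric.mem_ball] using this
    refine ⟨H ∪ I, y, g y, Finset.subset_union_left, ?_, ?_, ?_, ?_, ?_, ?_⟩
    · intro α h
      exact (if_pos h : (if α ∈ H then y α else x α) = y α).symm
    · intro α h
      have hm : α ∈ H ∪ I := Finset.mem_union_left _ h
      have hq : y₀ α ∈ interior (Q α) := hy₀V.2 α h
      show (if α ∈ H ∪ I then y₀ α else x α) ∈ Q α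
      rw [if_pos hm]
      exact interior_subset hq
    · intro α h
      have hm : α ∈ H ∪ I := Finset.mem_union_left _ h
      have hq : y₀ α ∈ interior (Q α) := hy₀V.2 α h
      have hz : g y α = y α := if_pos h
      rw [hz]
      show (if α ∈ H ∪ I then y₀ α else x α) ∈ Q α
      rw [if_pos hm]
      exact interior_subset hq
    · intro α h
      exact if_neg h
    · intro α h
      have hm : α ∉ H := fun hh => h (Finset.mem_union_left _ hh)
      exact if_neg hm
    · rw [hgy]
      have t1 : dist (f y₀) (f x) ≤ dist (f y₀) (f y) + dist (f y) (f x) := dist_triangle _ _ _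
      have t2 : dist (f y) (f x) ≤ dist (f y) (f (g y₀)) + dist (f (g y₀)) (f x) :=
        dist_triangle _ _ _
      have hc : dist (f y₀) (f y) = dist (f y) (f y₀) := dist_comm _ _
      linarith
  choose G yF zF hsub hagree hyQ hzQ hysup hzsup hgap using hstep
  -- the recursively defined sequence of finite coordinate sets
  set Hs : ℕ → Finset A := fun n => Nat.rec ∅ (fun _ Hp => G Hp) n with hHs
  have hHsucc : ∀ n, Hs (n + 1) = G (Hs n) := fun n => rfl
  have hmono : ∀ m n, m ≤ n → Hs m ⊆ Hs n := by
    intro m n h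
    induction n, h using Nat.le_induction with
    | base => exact Finset.Subset.refl _
    | succ n hmn ih => exact ih.trans (by rw [hHsucc]; exact hsub (Hs n))
  -- the compact set capturing the whole construction
  set C : ∀ α, Set (X α) := fun α =>
    Q α ∪ ({x α} ∪ ⋃ m, ({yF (Hs m) α, zF (Hs m) α} : Set (X α))) with hC
  have hCc : ∀ α, IsCompact (C α) := by
    intro α
    by_cases h : ∃ m, α ∈ Hs m
    · have hfind := Nat.find_spec h
      set n₀ := Nat.find h with hn₀
      have key : C α = Q α ∪ ({x α} ∪ ({yF (Hs (n₀ - 1)) α, zF (Hs (n₀ - 1)) α} : Set (X α))) := by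
        apply Set.Subset.antisymm
        · rintro p (hp | hp | hp)
          · exact Or.inl hp
          · exact Or.inr (Or.inl hp)
          · obtain ⟨m, hm⟩ := Set.mem_iUnion.1 hp
            by_cases h1 : α ∈ Hs m
            · rcases hm with hm | hm
              · exact Or.inl (hm ▸ hyQ (Hs m) α h1)
              · exact Or.inl (hm ▸ hzQ (Hs m) α h1)
            · by_cases h2 : α ∈ Hs (m + 1)
              · have hle : n₀ ≤ m + 1 := Nat.find_le h2
                have hgt : ¬n₀ ≤ m := fun hle' => h1 (hmono _ _ hle' hfind)
                have heq : n₀ - 1 = m := by omega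
                rw [heq]
                exact Or.inr (Or.inr hm)
              · rw [hHsucc] at h2
                rcases hm with hm | hm
                · exact Or.inr (Or.inl (hm ▸ hysup (Hs m) α h2))
                · exact Or.inr (Or.inl (hm ▸ hzsup (Hs m) α h2))
        · rintro p (hp | hp | hp)
          · exact Or.inl hp
          · exact Or.inr (Or.inl hp)
          · exact Or.inr (Or.inr (Set.mem_iUnion.2 ⟨n₀ - 1, hp⟩))
      rw [key]
      exact (hQc α).union ((Set.finite_singleton _).union (Set.toFinite _)).isCompact
    · push_neg at h
      have key : C α = Q α ∪ {x α} := by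
        apply Set.Subset.antisymm
        · rintro p (hp | hp | hp)
          · exact Or.inl hp
          · exact Or.inr hp
          · obtain ⟨m, hm⟩ := Set.mem_iUnion.1 hp
            have h2 : α ∉ Hs (m + 1) := h (m + 1)
            rw [hHsucc] at h2
            rcases hm with hm | hm
            · exact Or.inr (hm ▸ hysup (Hs m) α h2)
            · exact Or.inr (hm ▸ hzsup (Hs m) α h2)
        · rintro p (hp | hp)
          · exact Or.inl hp
          · exact Or.inr (Or.inl hp)
      rw [key]
      exact (hQc α).union isCompact_singleton
  set K : Set (∀ α, X α) := Set.pi Set.univ C with hK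
  have hKc : IsCompact K := isCompact_univ_pi hCc
  have hyK : ∀ n, yF (Hs n) ∈ K := by
    intro n α _
    exact Or.inr (Or.inr (Set.mem_iUnion.2 ⟨n, Or.inl rfl⟩))
  have hzK : ∀ n, zF (Hs n) ∈ K := by
    intro n α _
    exact Or.inr (Or.inr (Set.mem_iUnion.2 ⟨n, Or.inr rfl⟩))
  -- uniform continuity of f on K via a finite subcover
  have hfK : ContinuousOn f K := hf K hKc
  have hcov : ∀ w : ∀ α, X α, w ∈ K → ∃ I : Finset A, ∃ u : ∀ α, Set (X α),
      (∀ a ∈ I, IsOpen (u a) ∧ w a ∈ u a) ∧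
      ∀ v ∈ (I : Set A).pi u ∩ K, dist (f v) (f w) < ε / 16 := by
    intro w hw
    have hmem : f ⁻¹' Metric.ball (f w) (ε / 16) ∈ 𝓝[K] w :=
      hfK w hw (Metric.ball_mem_nhds _ (by positivity))
    obtain ⟨U, hUo, hwU, hUsub⟩ := mem_nhdsWithin.1 hmem
    obtain ⟨I, u, hIu, hpisub⟩ := isOpen_pi_iff.1 hUo w hwU
    refine ⟨I, u, hIu, fun v hv => ?_⟩
    have : v ∈ U ∩ K := ⟨hpisub hv.1, hv.2⟩
    have := hUsub this
    simpa [Metric.mem_ball] using this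
  choose! I uS hIu hball using hcov
  have hcover : K ⊆ ⋃ w : K, ((I w : Set A).pi (uS w)) := by
    intro v hv
    exact Set.mem_iUnion.2 ⟨⟨v, hv⟩, fun a ha => (hIu v hv a ha).2⟩
  obtain ⟨t, ht⟩ := hKc.elim_finite_subcover (fun w : K => ((I w : Set A).pi (uS w)))
    (fun w => isOpen_set_pi (I (w : ∀ α, X α)).finite_toSet
      fun a ha => (hIu w w.2 a ha).1) hcover
  -- the finite set of relevant coordinates
  set Fs : Set A := ⋃ w ∈ t, ((I (w : ∀ α, X α) : Set A)) with hFs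
  have hFsfin : Fs.Finite := Set.Finite.biUnion t.finite_toSet
    (fun w _ => (I (w : ∀ α, X α)).finite_toSet)
  set rank : A → ℕ := fun α => if h : ∃ m, α ∈ Hs m then Nat.find h else 0 with hrank
  set N : ℕ := hFsfin.toFinset.sup rank with hN
  have hagreeN : ∀ α ∈ Fs, yF (Hs N) α = zF (Hs N) α := by
    intro α hα
    by_cases h : ∃ m, α ∈ Hs m
    · have h1 : rank α ≤ N := Finset.le_sup (hFsfin.mem_toFinset.2 hα)
      have h2 : rank α = Nat.find h := by simp [hrank, h]
      have h3 : α ∈ Hs (Nat.find h) := Nat.find_spec h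
      have h4 : α ∈ Hs N := hmono _ _ (by omega) h3
      exact hagree (Hs N) α h4
    · push_neg at h
      have h2 : α ∉ Hs (N + 1) := h (N + 1)
      rw [hHsucc] at h2
      rw [hysup (Hs N) α h2, hzsup (Hs N) α h2]
  -- derive the contradiction
  obtain ⟨w, hwmem⟩ := Set.mem_iUnion.1 (ht (hyK N))
  simp only [Set.mem_iUnion] at hwmem
  obtain ⟨hwt, hyin⟩ := hwmem
  have hzin : zF (Hs N) ∈ (I (w : ∀ α, X α) : Set A).pi (uS (w : ∀ α, X α)) := by
    intro a ha
    have haFs : a ∈ Fs := Set.mem_biUnion hwt ha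
    rw [← hagreeN a haFs]
    exact hyin a ha
  have d1 : dist (f (yF (Hs N))) (f (w : ∀ α, X α)) < ε / 16 :=
    hball (w : ∀ α, X α) w.2 _ ⟨hyin, hyK N⟩
  have d2 : dist (f (zF (Hs N))) (f (w : ∀ α, X α)) < ε / 16 :=
    hball (w : ∀ α, X α) w.2 _ ⟨hzin, hzK N⟩
  have d3 : dist (f (yF (Hs N))) (f (zF (Hs N))) ≤
      dist (f (yF (Hs N))) (f (w : ∀ α, X α)) + dist (f (zF (Hs N))) (f (w : ∀ α, X α)) :=
    dist_triangle_right _ _ _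
  have := hgap (Hs N)
  linarith
end

section
/- Let (X_α)_{α ∈ A} be a family of topological spaces, X := ∏_{α ∈ A} X_α with the product topology, and Y a topological space. For each α ∈ A let K_α ⊆ X_α be a quasi-compact subset, and set K := ∏_{α ∈ A} K_α. Let f : X → Y be a map such that f|_C is continuous for every quasi-compact subset C ⊆ X, let x = (x_α)_{α ∈ A} ∈ K, let W ⊆ Y be a closed set, and let F ⊆ A be a finite subset such that Σ_F(K) ⊆ f⁻¹(W), where Σ_F(K) denotes the set of all y = (y_α)_{α ∈ A} ∈ X for which Supp_K(y) := {α ∈ A : y_α ∉ K_α} is finite and disjoint from F. Then every y ∈ X with y_α ∈ K_α for all α ∈ F satisfies f(y) ∈ W; that is, ∏_{α ∈ F} K_α × ∏_{α ∈ A∖F} X_α ⊆ f⁻¹(W). -/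
/-!
Modify `x` to agree with `y` on a finite set `S`. Since `x ∈ K` and `y` lies in `K` over `F`,
this point lies in `Σ_F(K)`, and as `S` grows these points converge to `y`. All of them, and `y`,
lie in the compact set `∏_α {x_α, y_α}`, on which `f` is continuous, so `f y` is a limit of
points of the closed set `W`.
-/

open Filter Topology

section FinsetPiecewise

variable {A : Type*} {X : A → Type*} [DecidableEq A]

theorem tendsto_finset_piecewise_atTop [∀ α, TopologicalSpace (X α)] (x y : ∀ α, X α) :
    Tendsto (fun S : Finset A => S.piecewise y x) atTop (𝓝 y) := by
  refine tendsto_pi_nhds.2 fun α => tendsto_const_nhds.congr' ?_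
  filter_upwards [eventually_ge_atTop {α}] with S hS
  exact (S.piecewise_eq_of_mem y x (hS (Finset.mem_singleton_self α))).symm

theorem setOf_finset_piecewise_notMem_subset (K : ∀ α, Set (X α)) {x : ∀ α, X α}
    (hx : ∀ α, x α ∈ K α) (y : ∀ α, X α) (S : Finset A) :
    {α | S.piecewise y x α ∉ K α} ⊆ ↑S ∩ {α | y α ∉ K α} := by
  intro α hα
  by_cases hS : α ∈ S
  · exact ⟨hS, by simpa [hS] using hα⟩
  · exact absurd (by simpa [hS] using hx α) hα

end FinsetPiecewise

theorem sigma_subset_preimage_implies_box_subset_preimage_general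
    {A : Type*} {X : A → Type*} [∀ α, TopologicalSpace (X α)]
    {Y : Type*} [TopologicalSpace Y]
    (K : ∀ α, Set (X α))
    (f : (∀ α, X α) → Y)
    (hf : ∀ C : Set (∀ α, X α), IsCompact C → ContinuousOn f C)
    (x : ∀ α, X α) (hx : ∀ α, x α ∈ K α)
    (W : Set Y) (hW : IsClosed W)
    (F : Finset A)
    (hSigma : ∀ y : ∀ α, X α, {α | y α ∉ K α}.Finite →
      {α | y α ∉ K α} ∩ (F : Set A) = ∅ → f y ∈ W) :
    ∀ y : ∀ α, X α, (∀ α ∈ F, y α ∈ K α) → f y ∈ W := by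
  classical
  intro y hy
  let C := Set.univ.pi fun α => ({x α, y α} : Set (X α))
  have hC : IsCompact C := isCompact_univ_pi fun α => (Set.toFinite _).isCompact
  have hyC : y ∈ C := fun α _ => Or.inr rfl
  have hxC : x ∈ C := fun α _ => Or.inl rfl
  have hlim : Tendsto (fun S : Finset A => S.piecewise y x) atTop (𝓝[C] y) :=
    tendsto_nhdsWithin_iff.2
      ⟨tendsto_finset_piecewise_atTop x y, .of_forall fun S => S.piecewise_mem_set_pi hyC hxC⟩
  have hmemW (S : Finset A) : f (S.piecewise y x) ∈ W := by
    have hsupp := setOf_finset_piecewise_notMem_subset K hx y S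
    refine hSigma _ (S.finite_toSet.subset fun α h => (hsupp h).1) ?_
    exact Set.eq_empty_of_forall_notMem fun α ⟨h, hαF⟩ => (hsupp h).2 (hy α hαF)
  exact hW.mem_of_tendsto ((hf C hC y hyC).tendsto.comp hlim) (.of_forall hmemW)

theorem sigma_subset_preimage_implies_box_subset_preimage
    {A : Type*} {X : A → Type*} [∀ α, TopologicalSpace (X α)]
    {Y : Type*} [TopologicalSpace Y]
    (K : ∀ α, Set (X α)) (hKq : ∀ α, IsCompact (K α))
    (f : (∀ α, X α) → Y)
    (hf : ∀ C : Set (∀ α, X α), IsCompact C → ContinuousOn f C)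
    (x : ∀ α, X α) (hx : ∀ α, x α ∈ K α)
    (W : Set Y) (hW : IsClosed W)
    (F : Finset A)
    (hSigma : ∀ y : ∀ α, X α, {α | y α ∉ K α}.Finite →
      {α | y α ∉ K α} ∩ (F : Set A) = ∅ → f y ∈ W) :
    ∀ y : ∀ α, X α, (∀ α ∈ F, y α ∈ K α) → f y ∈ W :=
  sigma_subset_preimage_implies_box_subset_preimage_general K f hf x hx W hW F hSigma
end

section
/- Let (X_α)_{α ∈ A} be a family of topological spaces, X := ∏_{α ∈ A} X_α with the product topology, and Y a topological space. For each α ∈ A let K_α ⊆ X_α be a subset, set K := ∏_{α ∈ A} K_α, let W ⊆ Y be a subset and f : X → Y a map. Suppose that for every finite subset F ⊆ A the set Σ_F(K) is not contained in f⁻¹(W), where Σ_F(K) denotes the set of all y = (y_α)_{α ∈ A} ∈ X for which Supp_K(y) := {α ∈ A : y_α ∉ K_α} is finite and disjoint from F. Then there exists a sequence (xⁿ)_{n ∈ ℕ} in X such that for every n: (a) Supp_K(xⁿ) is finite; (b) Supp_K(xᵐ) ∩ Supp_K(xˡ) = ∅ whenever m ≠ l; and (c) f(xⁿ) ∉ W.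 -/
/-!
Choose for each finite `F ⊆ A` a witness `y F` whose (finite) support avoids `F`, and iterate
`F ↦ F ∪ supp (y F)` starting from `∅`. The `n`-th witness is taken for the `n`-th stage; since
each stage contains the supports of all earlier witnesses, while the new witness avoids the
stage it was chosen for, the supports are pairwise disjoint.
-/

open Function

theorem Finset.subset_iterate_union_self_of_lt {A : Type*} [DecidableEq A]
    (g : Finset A → Finset A) {m l : ℕ} (hml : m < l) :
    g ((fun F => F ∪ g F)^[m] ∅) ⊆ (fun F => F ∪ g F)^[l] ∅ := by
  have hmono : Monotone fun n => (fun F => F ∪ g F)^[n] ∅ :=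
    monotone_nat_of_le_succ fun n => by
      simpa only [iterate_succ_apply'] using Finset.subset_union_left
  calc g ((fun F => F ∪ g F)^[m] ∅) ⊆ (fun F => F ∪ g F)^[m + 1] ∅ := by
        simpa only [iterate_succ_apply'] using Finset.subset_union_right
    _ ⊆ (fun F => F ∪ g F)^[l] ∅ := hmono hml

theorem exists_seq_pairwise_disjoint_of_forall_finset {A β : Type*} (s : β → Set A)
    (P : β → Prop) (h : ∀ F : Finset A, ∃ y, (s y).Finite ∧ Disjoint (s y) F ∧ P y) :
    ∃ x : ℕ → β, (∀ n, (s (x n)).Finite ∧ P (x n)) ∧ Pairwise (Disjoint on fun n => s (x n)) := by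
  classical
  choose y hfin hdisj hP using h
  let T (n : ℕ) : Finset A := (fun F => F ∪ (hfin F).toFinset)^[n] ∅
  refine ⟨fun n => y (T n), fun n => ⟨hfin _, hP _⟩, (pairwise_disjoint_on _).2 ?_⟩
  intro m l hml
  have hsub : s (y (T m)) ⊆ T l := by
    simpa using Finset.coe_subset.2 <|
      Finset.subset_iterate_union_self_of_lt (fun F => (hfin F).toFinset) hml
  exact ((hdisj (T l)).mono_right hsub).symm

theorem exists_sequence_with_disjoint_supports_general
    {A : Type*} {X : A → Type*}
    {Y : Type*}
    (K : ∀ α, Set (X α)) (W : Set Y) (f : (∀ α, X α) → Y)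
    (h : ∀ F : Finset A, ∃ y : ∀ α, X α,
      {α | y α ∉ K α}.Finite ∧ {α | y α ∉ K α} ∩ (F : Set A) = ∅ ∧ f y ∉ W) :
    ∃ x : ℕ → ∀ α, X α,
      (∀ n, {α | x n α ∉ K α}.Finite) ∧
      (∀ m l, m ≠ l → {α | x m α ∉ K α} ∩ {α | x l α ∉ K α} = ∅) ∧
      (∀ n, f (x n) ∉ W) := by
  simp_rw [← Set.disjoint_iff_inter_eq_empty] at h ⊢
  obtain ⟨x, hx, hdisj⟩ :=
    exists_seq_pairwise_disjoint_of_forall_finset (fun y => {α | y α ∉ K α}) (f · ∉ W) h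
  exact ⟨x, fun n => (hx n).1, fun _ _ hml => hdisj hml, fun n => (hx n).2⟩

theorem exists_sequence_with_disjoint_supports
    {A : Type*} {X : A → Type*} [∀ α, TopologicalSpace (X α)]
    {Y : Type*} [TopologicalSpace Y]
    (K : ∀ α, Set (X α)) (W : Set Y) (f : (∀ α, X α) → Y)
    (h : ∀ F : Finset A, ∃ y : ∀ α, X α,
      {α | y α ∉ K α}.Finite ∧ {α | y α ∉ K α} ∩ (F : Set A) = ∅ ∧ f y ∉ W) :
    ∃ x : ℕ → ∀ α, X α,
      (∀ n, {α | x n α ∉ K α}.Finite) ∧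
      (∀ m l, m ≠ l → {α | x m α ∉ K α} ∩ {α | x l α ∉ K α} = ∅) ∧
      (∀ n, f (x n) ∉ W) :=
  exists_sequence_with_disjoint_supports_general K W f h
end

section
/- Let (X_α)_{α ∈ A} be a family of topological spaces, X := ∏_{α ∈ A} X_α with the product topology. For each α ∈ A let K_α ⊆ X_α be a closed, quasi-compact subset, and set K := ∏_{α ∈ A} K_α. Let (xⁿ)_{n ∈ ℕ} be a sequence in X such that Supp_K(xⁿ) := {α ∈ A : xⁿ_α ∉ K_α} is finite for each n and Supp_K(xᵐ) ∩ Supp_K(xˡ) = ∅ whenever m ≠ l. Then the sequence (xⁿ) has a cluster point z ∈ X, and every cluster point of (xⁿ) lies in K. -/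
/-! Each index α lies in at most one of the pairwise disjoint supports, so every coordinate
sequence `n ↦ xⁿ_α` is eventually in `K_α`. An ultrafilter finer than the sequence's filter then
has all its coordinate images converging in the compact sets `K_α`, hence converges in the product,
which yields a cluster point; closedness of the `K_α` keeps every cluster point inside `K`. -/

open Filter Function Set Topology

theorem eventually_cofinite_notMem_of_pairwise_disjoint {ι A : Type*} {S : ι → Set A}
    (hS : Pairwise (Disjoint on S)) (a : A) : ∀ᶠ n in cofinite, a ∉ S n := by
  have hsub : {n | a ∈ S n}.Subsingleton := fun m hm l hl => by
    by_contra hne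
    exact disjoint_left.1 (hS hne) hm hl
  simpa using hsub.finite.eventually_cofinite_notMem

section ProductCoordinatesEventuallyIn

variable {ι : Type*} {X : ι → Type*} [∀ i, TopologicalSpace (X i)] {K : ∀ i, Set (X i)}
  {f : Filter (∀ i, X i)}

theorem exists_clusterPt_of_eventually_apply_mem_isCompact [NeBot f]
    (hK : ∀ i, IsCompact (K i)) (hf : ∀ i, ∀ᶠ p in f, p i ∈ K i) : ∃ z, ClusterPt z f := by
  let u := Ultrafilter.of f
  have hlim : ∀ i, ∃ zi, ↑(u.map (eval i)) ≤ 𝓝 zi := fun i =>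
    let ⟨zi, _, hzi⟩ := (hK i).ultrafilter_le_nhds (u.map (eval i))
      (le_principal_iff.2 (Ultrafilter.of_le f (hf i)))
    ⟨zi, hzi⟩
  choose z hz using hlim
  exact ⟨z, clusterPt_iff_ultrafilter.2 ⟨u, Ultrafilter.of_le f, tendsto_pi_nhds.2 hz⟩⟩

theorem ClusterPt.mem_pi_of_eventually_apply_mem {z : ∀ i, X i} (hz : ClusterPt z f)
    (hK : ∀ i, IsClosed (K i)) (hf : ∀ i, ∀ᶠ p in f, p i ∈ K i) : z ∈ pi univ K := fun i _ =>
  ((hK i).preimage (continuous_apply i)).closure_subset (hz.mem_closure_of_mem _ (hf i))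

end ProductCoordinatesEventuallyIn

theorem cluster_point_of_sequence_with_disjoint_supports_general
    {A : Type*} {X : A → Type*} [∀ α, TopologicalSpace (X α)]
    (K : ∀ α, Set (X α)) (hKcl : ∀ α, IsClosed (K α)) (hKq : ∀ α, IsCompact (K α))
    (x : ℕ → ∀ α, X α)
    (hdisj : ∀ m l, m ≠ l → {α | x m α ∉ K α} ∩ {α | x l α ∉ K α} = ∅) :
    (∃ z : ∀ α, X α, MapClusterPt z Filter.atTop x) ∧
    (∀ z : ∀ α, X α, MapClusterPt z Filter.atTop x → z ∈ Set.pi Set.univ K) := by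
  have hev : ∀ α, ∀ᶠ n in atTop, x n α ∈ K α := fun α => by
    rw [← Nat.cofinite_eq_atTop]
    simpa using eventually_cofinite_notMem_of_pairwise_disjoint
      (fun m l hne => disjoint_iff_inter_eq_empty.2 (hdisj m l hne)) α
  exact ⟨exists_clusterPt_of_eventually_apply_mem_isCompact hKq hev,
    fun z hz => hz.mem_pi_of_eventually_apply_mem hKcl hev⟩

theorem cluster_point_of_sequence_with_disjoint_supports
    {A : Type*} {X : A → Type*} [∀ α, TopologicalSpace (X α)]
    (K : ∀ α, Set (X α)) (hKcl : ∀ α, IsClosed (K α)) (hKq : ∀ α, IsCompact (K α))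
    (x : ℕ → ∀ α, X α)
    (hfin : ∀ n, {α | x n α ∉ K α}.Finite)
    (hdisj : ∀ m l, m ≠ l → {α | x m α ∉ K α} ∩ {α | x l α ∉ K α} = ∅) :
    (∃ z : ∀ α, X α, MapClusterPt z Filter.atTop x) ∧
    (∀ z : ∀ α, X α, MapClusterPt z Filter.atTop x → z ∈ Set.pi Set.univ K) :=
  cluster_point_of_sequence_with_disjoint_supports_general K hKcl hKq x hdisj
end

section
/- Let (X_α)_{α ∈ A} be a family of topological spaces in which every point has a neighbourhood basis of closed, quasi-compact neighbourhoods, let Y be a topological space in which every point has a neighbourhood basis of closed neighbourhoods, and let X := ∏_{α ∈ A} X_α carry the product topology. Let f : X → Y be a map such that f|_C is continuous for every quasi-compact subset C ⊆ X. Then for every x ∈ X and every neighbourhood U of f(x) in Y, the preimage f⁻¹(U) is a neighbourhood of x in X; that is, f is continuous at each point x ∈ X. -/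
/-!
Fix a closed neighbourhood `C` of `f x` and closed compact neighbourhoods `K α` of `x α` with
`f (∏ K α) ⊆ interior C`. Then for some finite `F`, every point of the tube `∏_{α ∈ F} K α` that
differs from `x` in only finitely many coordinates is mapped into `interior C`. Otherwise choose
such points `w m` with `f (w m) ∉ interior C` in the tube over `F m`, where `F (m + 1)` adds the
support of `w m`: each coordinate then leaves `K α` at most once, so the `w m` lie in a compact box
and have a cluster point there; it lies in `∏ K α` since the `K α` are closed, and continuity of
`f` on the box forces some `f (w m)` into `interior C`. Finally, every point `z` of the tube is a
limit of finitely supported perturbations of `x` inside the compact set `∏ {x α, z α}`, so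
`f z ∈ closure (interior C) ⊆ C`.
-/

open Set Filter Topology

theorem Monotone.subsingleton_setOf_mem_add_one_and_notMem {A : Type*} {F : ℕ → Finset A}
    (hF : Monotone F) (a : A) : {m | a ∈ F (m + 1) ∧ a ∉ F m}.Subsingleton := by
  intro m hm n hn
  rcases lt_trichotomy m n with h | h | h
  · exact absurd (hF h hm.1) hn.2
  · exact h
  · exact absurd (hF h hn.1) hm.2

section

variable {A : Type*} {X : A → Type*} [∀ α, TopologicalSpace (X α)]
  {Y : Type*} [TopologicalSpace Y] {f : (∀ α, X α) → Y}

theorem exists_isCompact_pi_mapsTo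
    (hX : ∀ (α : A) (x : X α), ∀ U ∈ 𝓝 x, ∃ K ∈ 𝓝 x, K ⊆ U ∧ IsClosed K ∧ IsCompact K)
    (hf : ∀ C : Set (∀ α, X α), IsCompact C → ContinuousOn f C) (x : ∀ α, X α)
    {V : Set Y} (hV : V ∈ 𝓝 (f x)) :
    ∃ K : ∀ α, Set (X α), (∀ α, K α ∈ 𝓝 (x α) ∧ IsClosed (K α) ∧ IsCompact (K α)) ∧
      MapsTo f (univ.pi K) V := by
  choose L hLx _ _ hLc using fun α => hX α (x α) univ univ_mem
  have hxL : x ∈ univ.pi L := fun α _ => mem_of_mem_nhds (hLx α)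
  obtain ⟨N, hN, hNV⟩ := mem_nhdsWithin_iff_exists_mem_nhds_inter.1
    ((hf _ (isCompact_univ_pi hLc) x hxL).preimage_mem_nhdsWithin hV)
  rw [nhds_pi, Filter.mem_pi] at hN
  obtain ⟨I, -, t, ht, htN⟩ := hN
  choose K hKx hKtL hKcl hKc using fun α => hX α (x α) _ (inter_mem (ht α) (hLx α))
  refine ⟨K, fun α => ⟨hKx α, hKcl α, hKc α⟩, fun w hw => hNV ⟨?_, ?_⟩⟩
  · exact htN fun α _ => (hKtL α (hw α trivial)).1
  · exact fun α _ => (hKtL α (hw α trivial)).2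

theorem frequently_apply_mem_of_finite_setOf_notMem {ι : Type*} [Infinite ι]
    (hf : ∀ C : Set (∀ α, X α), IsCompact C → ContinuousOn f C) {K : ∀ α, Set (X α)}
    (hKc : ∀ α, IsCompact (K α)) (hKcl : ∀ α, IsClosed (K α)) {U : Set Y} (hU : IsOpen U)
    (hKU : MapsTo f (univ.pi K) U) (w : ι → ∀ α, X α) (hw : ∀ α, {i | w i α ∉ K α}.Finite) :
    ∃ᶠ i in cofinite, f (w i) ∈ U := by
  set D : ∀ α, Set (X α) := fun α => K α ∪ (fun i => w i α) '' {i | w i α ∉ K α}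
  have hD : IsCompact (univ.pi D) :=
    isCompact_univ_pi fun α => (hKc α).union ((hw α).image _).isCompact
  have hwD : map w cofinite ≤ 𝓟 (univ.pi D) := by
    refine tendsto_principal.2 (Eventually.of_forall fun i α _ => ?_)
    by_cases h : w i α ∈ K α
    · exact Or.inl h
    · exact Or.inr ⟨i, h, rfl⟩
  obtain ⟨u, huD, hu⟩ := hD.exists_mapClusterPt hwD
  have huK : u ∈ univ.pi K := fun α _ =>
    (hKcl α).mem_of_mapClusterPt (hu.tendsto_comp ((continuous_apply α).tendsto u))
      (eventually_cofinite.2 (hw α))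
  have hfu : MapClusterPt (f u) cofinite (f ∘ w) :=
    hu.tendsto_comp' ((hf _ hD u huD).mono_left (inf_le_inf_left _ hwD))
  exact hfu.frequently (hU.mem_nhds (hKU huK))

theorem exists_finset_forall_apply_mem
    (hf : ∀ C : Set (∀ α, X α), IsCompact C → ContinuousOn f C) {K : ∀ α, Set (X α)}
    (hKc : ∀ α, IsCompact (K α)) (hKcl : ∀ α, IsClosed (K α)) {x : ∀ α, X α}
    (hxK : x ∈ univ.pi K) {U : Set Y} (hU : IsOpen U) (hKU : MapsTo f (univ.pi K) U) :
    ∃ F : Finset A, ∀ w ∈ (F : Set A).pi K, {α | w α ≠ x α}.Finite → f w ∈ U := by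
  classical
  by_contra! hbad
  choose w hwK hwx hwU using hbad
  let F : ℕ → Finset A := fun m => Nat.rec ∅ (fun _ F => F ∪ (hwx F).toFinset) m
  have hF : Monotone F := monotone_nat_of_le_succ fun _ => Finset.subset_union_left
  -- Leaving `K α` at step `m` forces `α ∉ F m` and `w (F m) α ≠ x α`, so `α` enters `F` then.
  have hexit : ∀ α, {m | w (F m) α ∉ K α}.Finite := fun α =>
    (hF.subsingleton_setOf_mem_add_one_and_notMem α).finite.subset fun m hm =>
      ⟨Finset.mem_union_right _ ((hwx _).mem_toFinset.2 fun h => hm (h ▸ hxK α trivial)),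
        fun hα => hm (hwK _ α hα)⟩
  obtain ⟨m, hm⟩ :=
    (frequently_apply_mem_of_finite_setOf_notMem hf hKc hKcl hU hKU _ hexit).exists
  exact hwU _ hm

theorem pi_subset_preimage_closure_of_forall_apply_mem
    (hf : ∀ C : Set (∀ α, X α), IsCompact C → ContinuousOn f C) {x : ∀ α, X α} {F : Set A}
    {K : ∀ α, Set (X α)} (hxK : x ∈ F.pi K) {U : Set Y}
    (hU : ∀ w ∈ F.pi K, {α | w α ≠ x α}.Finite → f w ∈ U) :
    F.pi K ⊆ f ⁻¹' closure U := by
  classical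
  intro z hz
  set S := range fun s : Finset A => s.piecewise z x
  have hzS : z ∈ closure S := mem_closure_iff_nhds.2 fun t ht =>
    let ⟨s, hs⟩ := exists_finset_piecewise_mem_of_mem_nhds ht x
    ⟨_, hs, s, rfl⟩
  have hSzx : S ⊆ univ.pi fun α => {x α, z α} := range_subset_iff.2 fun s =>
    s.piecewise_mem_set_pi (fun _ _ => Or.inr rfl) (fun _ _ => Or.inl rfl)
  have hfS : ContinuousWithinAt f S z :=
    (hf _ (isCompact_univ_pi fun _ => (toFinite _).isCompact) z fun _ _ => Or.inr rfl).mono hSzx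
  refine hfS.mem_closure hzS ?_
  rintro _ ⟨s, rfl⟩
  refine hU _ (s.piecewise_mem_set_pi hz hxK) (s.finite_toSet.subset fun α hα => ?_)
  by_contra h
  exact hα (s.piecewise_eq_of_notMem _ _ h)

end

theorem preimage_nhds_of_continuousOn_quasicompact
    {A : Type*} {X : A → Type*} [∀ α, TopologicalSpace (X α)]
    {Y : Type*} [TopologicalSpace Y]
    (hX : ∀ (α : A) (x : X α), ∀ U ∈ nhds x,
      ∃ K ∈ nhds x, K ⊆ U ∧ IsClosed K ∧ IsCompact K)
    (hY : ∀ (y : Y), ∀ U ∈ nhds y, ∃ C ∈ nhds y, C ⊆ U ∧ IsClosed C)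
    (f : (∀ α, X α) → Y)
    (hf : ∀ C : Set (∀ α, X α), IsCompact C → ContinuousOn f C) :
    ∀ x : ∀ α, X α, (∀ U ∈ nhds (f x), f ⁻¹' U ∈ nhds x) ∧ ContinuousAt f x := by
  intro x
  have hpre : ∀ U ∈ 𝓝 (f x), f ⁻¹' U ∈ 𝓝 x := by
    intro U hU
    obtain ⟨C, hC, hCU, hCcl⟩ := hY (f x) U hU
    obtain ⟨K, hK, hKC⟩ := exists_isCompact_pi_mapsTo hX hf x (interior_mem_nhds.2 hC)
    have hxK : x ∈ univ.pi K := fun α _ => mem_of_mem_nhds (hK α).1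
    obtain ⟨F, hF⟩ := exists_finset_forall_apply_mem hf (fun α => (hK α).2.2)
      (fun α => (hK α).2.1) hxK isOpen_interior hKC
    have hFK := pi_subset_preimage_closure_of_forall_apply_mem hf (fun α _ => hxK α trivial) hF
    filter_upwards [set_pi_mem_nhds F.finite_toSet fun α _ => (hK α).1] with z hz
    exact hCU (closure_minimal interior_subset hCcl (hFK hz))
  exact ⟨hpre, tendsto_def.2 hpre⟩
end
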